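/- Suppose the outcome sequence of a partizan subtraction game (S_L, S_R) is eventually periodic with period p, that some position n in the periodic part has outcome P, and that a ∈ S_L. If no position in the periodic part has outcome N, this yields a contradiction; equivalently: if the periodic part contains a P-position and some position of outcome L or R, then the periodic part also contains an N-position. -/
import Mathlib


mutual
def LeftFirstWins (SL SR : Finset ℕ) : ℕ → Prop
  | n => ∃ s ∈ SL, ∃ (_ : 0 < s) (_ : s ≤ n), ¬ RightFirstWins SL SR (n - s)
  termination_by n => n
  decreasing_by omega
def RightFirstWins (SL SR : Finset ℕ) : ℕ → Prop
  | n => ∃ s ∈ SR, ∃ (_ : 0 < s) (_ : s ≤ n), ¬ LeftFirstWins SL SR (n - s)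
  termination_by n => n
  decreasing_by omega
end

inductive Outcome | P | L | R | N
deriving DecidableEq

open Classical in
noncomputable def outcome (SL SR : Finset ℕ) (n : ℕ) : Outcome :=
  if LeftFirstWins SL SR n then
    if RightFirstWins SL SR n then .N else .L
  else
    if RightFirstWins SL SR n then .R else .P

lemma left_step (SL SR : Finset ℕ) (a : ℕ) (ha : a ∈ SL) (hapos : 0 < a)
    (n : ℕ) (h : ¬ RightFirstWins SL SR n) : LeftFirstWins SL SR (n + a) := by
  rw [LeftFirstWins]
  exact ⟨a, ha, hapos, Nat.le_add_left a n, by simpa using h⟩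

lemma outcome_L_of (SL SR : Finset ℕ) (n : ℕ) (hL : LeftFirstWins SL SR n)
    (hne : outcome SL SR n ≠ .N) :
    outcome SL SR n = .L ∧ ¬ RightFirstWins SL SR n := by
  unfold outcome at *
  by_cases hR : RightFirstWins SL SR n
  · simp [hL, hR] at hne
  · simp [hL, hR]

theorem stmt_14 (SL SR : Finset ℕ) (a : ℕ) (ha : a ∈ SL) (hapos : 0 < a)
    (p n₁ : ℕ) (hp : 0 < p)
    (hper : ∀ n ≥ n₁, outcome SL SR (n + p) = outcome SL SR n)
    (hP : ∃ n ≥ n₁, outcome SL SR n = .P)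
    (hLR : ∃ m ≥ n₁, outcome SL SR m = .L ∨ outcome SL SR m = .R) :
    ∃ n ≥ n₁, outcome SL SR n = .N := by
  by_contra hN
  push_neg at hN
  obtain ⟨n, hn, hPn⟩ := hP
  have hnotR : ¬ RightFirstWins SL SR n := by
    intro h
    unfold outcome at hPn
    split_ifs at hPn <;> simp_all
  have key : ∀ k : ℕ, ¬ RightFirstWins SL SR (n + k * a) ∧
      (k = 0 ∨ outcome SL SR (n + k * a) = .L) := by
    intro k
    induction k with
    | zero => simpa using hnotR
    | succ k ih =>
      have hL : LeftFirstWins SL SR (n + k * a + a) :=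
        left_step SL SR a ha hapos _ ih.1
      have he : n + (k + 1) * a = n + k * a + a := by ring
      rw [he]
      have hge : n + k * a + a ≥ n₁ := le_trans hn (by omega)
      have hne : outcome SL SR (n + k * a + a) ≠ .N := hN _ hge
      obtain ⟨h1, h2⟩ := outcome_L_of SL SR _ hL hne
      exact ⟨h2, Or.inr h1⟩
  have hperk : ∀ j : ℕ, outcome SL SR (n + j * p) = outcome SL SR n := by
    intro j
    induction j with
    | zero => simp
    | succ j ih =>
      have he : n + (j + 1) * p = n + j * p + p := by ring
      rw [he, hper _ (le_trans hn (by omega)), ih]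
  have h1 := (key p).2.resolve_left (by omega)
  have h2 := hperk a
  rw [mul_comm a p] at h2
  rw [h1, hPn] at h2
  exact Outcome.noConfusion h2
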